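/- arXiv:math/0410589 — 3 statements merged into one kernel-verified Lean document; each statement's English description precedes it below -/
import Mathlib

section
/- Let M be a cocomplete category and ⊗ : M × M → M a functor preserving colimits in each variable. Let C and D be finite posets, c ∈ C, d ∈ D, and let X : C ⥤ M and Y : D ⥤ M be diagrams. Then the colimit of the functor (a,b) ↦ X(a) ⊗ Y(b) over the full subposet {(a,b) ∈ C × D : (a,b) < (c,d)} is naturally isomorphic to the pushout of the diagram (colim_{a<c} X(a)) ⊗ Y(d) ← colim_{(a,b) : a<c, b<d} (X(a) ⊗ Y(b)) → X(c) ⊗ (colim_{b<d} Y(b)), where all maps are induced by the structure maps of X and Y and the universal properties of the colimits. -/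
/-!
STATEMENT 2: Let `M` be cocomplete and `⊗ = T` a bifunctor preserving colimits in each
variable.  For finite posets `C`, `D`, elements `c ∈ C`, `d ∈ D`, and diagrams
`X : C ⥤ M`, `Y : D ⥤ M`, the colimit of `(a,b) ↦ X a ⊗ Y b` over
`{(a,b) : (a,b) < (c,d)}` is the pushout of
`(colim_{a<c} X a) ⊗ Y d ⟵ colim_{a<c,b<d} X a ⊗ Y b ⟶ X c ⊗ (colim_{b<d} Y b)`,
all maps being the canonical ones.  This is expressed as an `IsPushout` statement for
the canonical square.
-/

open CategoryTheory Limits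

namespace FrankeStmt2

variable {M : Type 1} [Category.{0} M] [HasColimits M]
variable (T : M ⥤ M ⥤ M)
variable {C D : Type} [PartialOrder C] [PartialOrder D]

/-- The inclusion functor of the subposet of elements strictly below `c`. -/
def belowIncl (c : C) : {c' : C // c' < c} ⥤ C :=
  (Subtype.mono_coe _).functor

/-- The diagram `e ↦ T (X (u e)) (Y (v e))` indexed by a poset `E` with monotone maps
`u`, `v` into the index posets of `X` and `Y`. -/
def ext2 (X : C ⥤ M) (Y : D ⥤ M) {E : Type} [PartialOrder E]
    {u : E → C} {v : E → D} (hu : Monotone u) (hv : Monotone v) : E ⥤ M :=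
  ((hu.functor ⋙ X).prod' (hv.functor ⋙ Y)) ⋙ Functor.uncurry.obj T

variable (X : C ⥤ M) (Y : D ⥤ M) (c : C) (d : D)

/-- The diagram `(a,b) ↦ X a ⊗ Y b` over `{(a,b) // (a,b) < (c,d)}` (strict product
order). -/
def fullDiagram : {p : C × D // p < (c, d)} ⥤ M :=
  ext2 T X Y (u := fun p => p.1.1) (v := fun p => p.1.2)
    (fun _ _ h => h.1) (fun _ _ h => h.2)

/-- The diagram `(a,b) ↦ X a ⊗ Y b` over `{(a,b) // a < c ∧ b < d}`. -/
def bothDiagram : {p : C × D // p.1 < c ∧ p.2 < d} ⥤ M :=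
  ext2 T X Y (u := fun p => p.1.1) (v := fun p => p.1.2)
    (fun _ _ h => h.1) (fun _ _ h => h.2)

/-- `colim_{(a,b) < (c,d)} X a ⊗ Y b`. -/
noncomputable def cornerObj : M := colimit (fullDiagram T X Y c d)

/-- `colim_{a<c, b<d} X a ⊗ Y b`. -/
noncomputable def bothObj : M := colimit (bothDiagram T X Y c d)

/-- `(colim_{a<c} X a) ⊗ Y d`. -/
noncomputable def leftObj : M := (T.obj (colimit (belowIncl c ⋙ X))).obj (Y.obj d)

/-- `X c ⊗ (colim_{b<d} Y b)`. -/
noncomputable def rightObj : M := (T.obj (X.obj c)).obj (colimit (belowIncl d ⋙ Y))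

/-- The canonical map `colim_{a<c,b<d} X a ⊗ Y b ⟶ (colim_{a<c} X a) ⊗ Y d`. -/
noncomputable def toLeft : bothObj T X Y c d ⟶ leftObj T X Y c d :=
  colimit.desc _
    { pt := leftObj T X Y c d
      ι :=
        { app := fun q =>
            (T.obj (X.obj q.1.1)).map (Y.map (homOfLE q.2.2.le)) ≫
              (T.map (colimit.ι (belowIncl c ⋙ X) ⟨q.1.1, q.2.1⟩)).app (Y.obj d)
          naturality := by
            intro q q' m
            have hw := colimit.w (belowIncl c ⋙ X)
              (homOfLE (show (⟨q.1.1, q.2.1⟩ : {a : C // a < c}) ≤ ⟨q'.1.1, q'.2.1⟩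
                from (leOfHom m).1))
            show ((T.map (X.map (homOfLE (leOfHom m).1))).app (Y.obj q.1.2) ≫
                (T.obj (X.obj q'.1.1)).map (Y.map (homOfLE (leOfHom m).2))) ≫
                ((T.obj (X.obj q'.1.1)).map (Y.map (homOfLE q'.2.2.le)) ≫
                (T.map (colimit.ι (belowIncl c ⋙ X) ⟨q'.1.1, q'.2.1⟩)).app (Y.obj d)) =
              ((T.obj (X.obj q.1.1)).map (Y.map (homOfLE q.2.2.le)) ≫
                (T.map (colimit.ι (belowIncl c ⋙ X) ⟨q.1.1, q.2.1⟩)).app (Y.obj d)) ≫ 𝟙 _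
            erw [Category.comp_id, ← hw, T.map_comp, NatTrans.comp_app, Category.assoc,
              ← Functor.map_comp_assoc, ← Y.map_comp, ← NatTrans.naturality_assoc]
            rfl } }

/-- The canonical map `colim_{a<c,b<d} X a ⊗ Y b ⟶ X c ⊗ (colim_{b<d} Y b)`. -/
noncomputable def toRight : bothObj T X Y c d ⟶ rightObj T X Y c d :=
  colimit.desc _
    { pt := rightObj T X Y c d
      ι :=
        { app := fun q =>
            (T.map (X.map (homOfLE q.2.1.le))).app (Y.obj q.1.2) ≫
              (T.obj (X.obj c)).map (colimit.ι (belowIncl d ⋙ Y) ⟨q.1.2, q.2.2⟩)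
          naturality := by
            intro q q' m
            have hw := colimit.w (belowIncl d ⋙ Y)
              (homOfLE (show (⟨q.1.2, q.2.2⟩ : {b : D // b < d}) ≤ ⟨q'.1.2, q'.2.2⟩
                from (leOfHom m).2))
            show ((T.map (X.map (homOfLE (leOfHom m).1))).app (Y.obj q.1.2) ≫
                (T.obj (X.obj q'.1.1)).map (Y.map (homOfLE (leOfHom m).2))) ≫
                ((T.map (X.map (homOfLE q'.2.1.le))).app (Y.obj q'.1.2) ≫
                (T.obj (X.obj c)).map (colimit.ι (belowIncl d ⋙ Y) ⟨q'.1.2, q'.2.2⟩)) =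
              ((T.map (X.map (homOfLE q.2.1.le))).app (Y.obj q.1.2) ≫
                (T.obj (X.obj c)).map (colimit.ι (belowIncl d ⋙ Y) ⟨q.1.2, q.2.2⟩)) ≫ 𝟙 _
            have e1 : X.map (homOfLE q.2.1.le) =
                X.map (homOfLE (leOfHom m).1) ≫ X.map (homOfLE q'.2.1.le) := by
              rw [← X.map_comp]
              rfl
            erw [Category.comp_id, Category.assoc,
              NatTrans.naturality_assoc (T.map (X.map (homOfLE q'.2.1.le)))
                (Y.map (homOfLE (leOfHom m).2)), e1,
              T.map_comp (X.map (homOfLE (leOfHom m).1)) (X.map (homOfLE q'.2.1.le)),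
              NatTrans.comp_app, Category.assoc, ← hw, Functor.map_comp (T.obj (X.obj c))]
            rfl } }

/-- The canonical map `(colim_{a<c} X a) ⊗ Y d ⟶ colim_{(a,b)<(c,d)} X a ⊗ Y b`,
defined using that `- ⊗ Y d` preserves colimits. -/
noncomputable def fromLeft [∀ Z : M, PreservesColimits (T.flip.obj Z)] :
    leftObj T X Y c d ⟶ cornerObj T X Y c d :=
  (isColimitOfPreserves (T.flip.obj (Y.obj d))
    (colimit.isColimit (belowIncl c ⋙ X))).desc
    { pt := cornerObj T X Y c d
      ι :=
        { app := fun a => colimit.ι (fullDiagram T X Y c d)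
            ⟨(a.1, d), Prod.lt_iff.mpr (Or.inl ⟨a.2, le_rfl⟩)⟩
          naturality := by
            intro a a' m
            have hw := colimit.w (fullDiagram T X Y c d)
              (homOfLE (show ((⟨(a.1, d), Prod.lt_iff.mpr (Or.inl ⟨a.2, le_rfl⟩)⟩ :
                  {p : C × D // p < (c, d)})) ≤
                  ⟨(a'.1, d), Prod.lt_iff.mpr (Or.inl ⟨a'.2, le_rfl⟩)⟩
                from ⟨leOfHom m, le_rfl⟩))
            refine Eq.trans ?_ (hw.trans (Category.comp_id _).symm)
            have key : (fullDiagram T X Y c d).map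
                (homOfLE (show ((⟨(a.1, d), Prod.lt_iff.mpr (Or.inl ⟨a.2, le_rfl⟩)⟩ :
                    {p : C × D // p < (c, d)})) ≤
                    ⟨(a'.1, d), Prod.lt_iff.mpr (Or.inl ⟨a'.2, le_rfl⟩)⟩
                  from ⟨leOfHom m, le_rfl⟩)) = (T.map (X.map (homOfLE (leOfHom m)))).app (Y.obj d) := by
              show (T.map (X.map (homOfLE (leOfHom m)))).app (Y.obj d) ≫
                  (T.obj (X.obj a'.1)).map (Y.map (𝟙 d)) = _
              rw [Y.map_id, (T.obj (X.obj a'.1)).map_id, Category.comp_id]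
            erw [key]
            rfl } }

/-- The canonical map `X c ⊗ (colim_{b<d} Y b) ⟶ colim_{(a,b)<(c,d)} X a ⊗ Y b`,
defined using that `X c ⊗ -` preserves colimits. -/
noncomputable def fromRight [∀ Z : M, PreservesColimits (T.obj Z)] :
    rightObj T X Y c d ⟶ cornerObj T X Y c d :=
  (isColimitOfPreserves (T.obj (X.obj c))
    (colimit.isColimit (belowIncl d ⋙ Y))).desc
    { pt := cornerObj T X Y c d
      ι :=
        { app := fun b => colimit.ι (fullDiagram T X Y c d)
            ⟨(c, b.1), Prod.lt_iff.mpr (Or.inr ⟨le_rfl, b.2⟩)⟩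
          naturality := by
            intro b b' m
            have hw := colimit.w (fullDiagram T X Y c d)
              (homOfLE (show ((⟨(c, b.1), Prod.lt_iff.mpr (Or.inr ⟨le_rfl, b.2⟩)⟩ :
                  {p : C × D // p < (c, d)})) ≤
                  ⟨(c, b'.1), Prod.lt_iff.mpr (Or.inr ⟨le_rfl, b'.2⟩)⟩
                from ⟨le_rfl, leOfHom m⟩))
            refine Eq.trans ?_ (hw.trans (Category.comp_id _).symm)
            have key : (fullDiagram T X Y c d).map
                (homOfLE (show ((⟨(c, b.1), Prod.lt_iff.mpr (Or.inr ⟨le_rfl, b.2⟩)⟩ :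
                    {p : C × D // p < (c, d)})) ≤
                    ⟨(c, b'.1), Prod.lt_iff.mpr (Or.inr ⟨le_rfl, b'.2⟩)⟩
                  from ⟨le_rfl, leOfHom m⟩)) = (T.obj (X.obj c)).map (Y.map (homOfLE (leOfHom m))) := by
              show (T.map (X.map (𝟙 c))).app (Y.obj b.1) ≫
                  (T.obj (X.obj c)).map (Y.map (homOfLE (leOfHom m))) = _
              rw [X.map_id, T.map_id, NatTrans.id_app, Category.id_comp]
            erw [key]
            rfl } }


section Aux

attribute [local instance] Classical.propDecidable

variable [∀ Z : M, PreservesColimits (T.obj Z)] [∀ Z : M, PreservesColimits (T.flip.obj Z)]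

lemma snd_lt (p : {p : C × D // p < (c, d)}) (h : ¬ p.1.1 < c) : p.1.2 < d := by
  have hac : p.1.1 = c := by
    by_contra hne
    exact h (lt_of_le_of_ne p.2.le.1 hne)
  rcases lt_or_eq_of_le (p.2.le.2 : p.1.2 ≤ d) with h' | h'
  · exact h'
  · exact absurd (Prod.ext hac h') p.2.ne

lemma fullDiagram_map {p p' : {p : C × D // p < (c, d)}} (m : p ⟶ p')
    (h1 : p.1.1 ≤ p'.1.1) (h2 : p.1.2 ≤ p'.1.2) :
    (fullDiagram T X Y c d).map m =
      (T.map (X.map (homOfLE h1))).app (Y.obj p.1.2) ≫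
        (T.obj (X.obj p'.1.1)).map (Y.map (homOfLE h2)) := rfl

lemma fromLeft_fac (a : {a : C // a < c}) :
    (T.map (colimit.ι (belowIncl c ⋙ X) a)).app (Y.obj d) ≫ fromLeft T X Y c d =
      colimit.ι (fullDiagram T X Y c d)
        ⟨(a.1, d), Prod.lt_iff.mpr (Or.inl ⟨a.2, le_rfl⟩)⟩ :=
  (isColimitOfPreserves (T.flip.obj (Y.obj d))
    (colimit.isColimit (belowIncl c ⋙ X))).fac _ a

lemma fromRight_fac (b : {b : D // b < d}) :
    (T.obj (X.obj c)).map (colimit.ι (belowIncl d ⋙ Y) b) ≫ fromRight T X Y c d =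
      colimit.ι (fullDiagram T X Y c d)
        ⟨(c, b.1), Prod.lt_iff.mpr (Or.inr ⟨le_rfl, b.2⟩)⟩ :=
  (isColimitOfPreserves (T.obj (X.obj c))
    (colimit.isColimit (belowIncl d ⋙ Y))).fac _ b

lemma key_left (p : {p : C × D // p < (c, d)}) (h : p.1.1 < c) :
    colimit.ι (fullDiagram T X Y c d) p =
      (T.obj (X.obj p.1.1)).map (Y.map (homOfLE p.2.le.2)) ≫
        (T.map (colimit.ι (belowIncl c ⋙ X) ⟨p.1.1, h⟩)).app (Y.obj d) ≫
          fromLeft T X Y c d := by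
  erw [fromLeft_fac]
  have hle : p ≤ (⟨(p.1.1, d), Prod.lt_iff.mpr (Or.inl ⟨h, le_rfl⟩)⟩ :
      {p : C × D // p < (c, d)}) := ⟨le_rfl, p.2.le.2⟩
  rw [← colimit.w (fullDiagram T X Y c d) (homOfLE hle),
    fullDiagram_map T X Y c d (homOfLE hle) le_rfl p.2.le.2]
  simp
  rfl

lemma key_right (p : {p : C × D // p < (c, d)}) (h : p.1.2 < d) :
    colimit.ι (fullDiagram T X Y c d) p =
      (T.map (X.map (homOfLE p.2.le.1))).app (Y.obj p.1.2) ≫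
        (T.obj (X.obj c)).map (colimit.ι (belowIncl d ⋙ Y) ⟨p.1.2, h⟩) ≫
          fromRight T X Y c d := by
  erw [fromRight_fac]
  have hle : p ≤ (⟨(c, p.1.2), Prod.lt_iff.mpr (Or.inr ⟨le_rfl, h⟩)⟩ :
      {p : C × D // p < (c, d)}) := ⟨p.2.le.1, le_rfl⟩
  rw [← colimit.w (fullDiagram T X Y c d) (homOfLE hle),
    fullDiagram_map T X Y c d (homOfLE hle) p.2.le.1 le_rfl]
  simp
  rfl

variable {W : M} (f : leftObj T X Y c d ⟶ W) (g : rightObj T X Y c d ⟶ W)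

/-- Candidate cocone component through the left leg. -/
noncomputable def leftF (p : {p : C × D // p < (c, d)}) (h : p.1.1 < c) :
    (T.obj (X.obj p.1.1)).obj (Y.obj p.1.2) ⟶ W :=
  (T.obj (X.obj p.1.1)).map (Y.map (homOfLE p.2.le.2)) ≫
    (T.map (colimit.ι (belowIncl c ⋙ X) ⟨p.1.1, h⟩)).app (Y.obj d) ≫ f

/-- Candidate cocone component through the right leg. -/
noncomputable def rightF (p : {p : C × D // p < (c, d)}) (h : p.1.2 < d) :
    (T.obj (X.obj p.1.1)).obj (Y.obj p.1.2) ⟶ W :=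
  (T.map (X.map (homOfLE p.2.le.1))).app (Y.obj p.1.2) ≫
    (T.obj (X.obj c)).map (colimit.ι (belowIncl d ⋙ Y) ⟨p.1.2, h⟩) ≫ g

lemma ι_toLeft (p : {p : C × D // p < (c, d)}) (h1 : p.1.1 < c) (h2 : p.1.2 < d) :
    colimit.ι (bothDiagram T X Y c d) ⟨p.1, h1, h2⟩ ≫ toLeft T X Y c d ≫ f =
      leftF T X Y c d f p h1 := by
  erw [← Category.assoc, toLeft, colimit.ι_desc]
  dsimp [leftF]
  erw [Category.assoc]
  rfl

lemma ι_toRight (p : {p : C × D // p < (c, d)}) (h1 : p.1.1 < c) (h2 : p.1.2 < d) :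
    colimit.ι (bothDiagram T X Y c d) ⟨p.1, h1, h2⟩ ≫ toRight T X Y c d ≫ g =
      rightF T X Y c d g p h2 := by
  erw [← Category.assoc, toRight, colimit.ι_desc]
  dsimp [rightF]
  erw [Category.assoc]
  rfl

lemma overlap (hfg : toLeft T X Y c d ≫ f = toRight T X Y c d ≫ g)
    (p : {p : C × D // p < (c, d)}) (h1 : p.1.1 < c) (h2 : p.1.2 < d) :
    leftF T X Y c d f p h1 = rightF T X Y c d g p h2 := by
  erw [← ι_toLeft T X Y c d f p h1 h2, ← ι_toRight T X Y c d g p h1 h2, hfg]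
  rfl

lemma leftF_nat {p p' : {p : C × D // p < (c, d)}} (m : p ⟶ p') (h : p'.1.1 < c) :
    (fullDiagram T X Y c d).map m ≫ leftF T X Y c d f p' h =
      leftF T X Y c d f p (lt_of_le_of_lt (leOfHom m).1 h) := by
  rw [fullDiagram_map T X Y c d m (leOfHom m).1 (leOfHom m).2]
  dsimp [leftF]
  erw [Category.assoc, ← Functor.map_comp_assoc, ← Y.map_comp,
    ← NatTrans.naturality_assoc, ← NatTrans.comp_app_assoc, ← T.map_comp]
  have hw := colimit.w (belowIncl c ⋙ X)
    (homOfLE (show (⟨p.1.1, lt_of_le_of_lt (leOfHom m).1 h⟩ : {a : C // a < c}) ≤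
      ⟨p'.1.1, h⟩ from (leOfHom m).1))
  dsimp [belowIncl] at hw ⊢
  rw [← hw]
  congr 1

lemma rightF_nat {p p' : {p : C × D // p < (c, d)}} (m : p ⟶ p') (h : p'.1.2 < d) :
    (fullDiagram T X Y c d).map m ≫ rightF T X Y c d g p' h =
      rightF T X Y c d g p (lt_of_le_of_lt (leOfHom m).2 h) := by
  rw [fullDiagram_map T X Y c d m (leOfHom m).1 (leOfHom m).2]
  dsimp [rightF]
  erw [Category.assoc, NatTrans.naturality_assoc, ← Functor.map_comp_assoc,
    ← NatTrans.comp_app_assoc, ← T.map_comp, ← X.map_comp]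
  have hw := colimit.w (belowIncl d ⋙ Y)
    (homOfLE (show (⟨p.1.2, lt_of_le_of_lt (leOfHom m).2 h⟩ : {b : D // b < d}) ≤
      ⟨p'.1.2, h⟩ from (leOfHom m).2))
  dsimp [belowIncl] at hw ⊢
  rw [← hw]
  congr 1

/-- The universal map out of the corner colimit induced by a compatible pair. -/
noncomputable def descFun (hfg : toLeft T X Y c d ≫ f = toRight T X Y c d ≫ g) :
    cornerObj T X Y c d ⟶ W :=
  colimit.desc (fullDiagram T X Y c d)
    { pt := W
      ι :=
        { app := fun p =>
            if h : p.1.1 < c then leftF T X Y c d f p h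
            else rightF T X Y c d g p (snd_lt c d p h)
          naturality := by
            intro p p' m
            dsimp
            rw [Category.comp_id]
            by_cases h' : p'.1.1 < c
            · erw [dif_pos h', dif_pos (lt_of_le_of_lt (leOfHom m).1 h'),
                leftF_nat T X Y c d f m h']
            · erw [dif_neg h']
              by_cases h : p.1.1 < c
              · erw [dif_pos h, rightF_nat T X Y c d g m (snd_lt c d p' h'),
                  ← overlap T X Y c d f g hfg p h
                    (lt_of_le_of_lt (leOfHom m).2 (snd_lt c d p' h'))]
              · erw [dif_neg h, rightF_nat T X Y c d g m (snd_lt c d p' h')] } }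

lemma fromLeft_descFun (hfg : toLeft T X Y c d ≫ f = toRight T X Y c d ≫ g) :
    fromLeft T X Y c d ≫ descFun T X Y c d f g hfg = f := by
  apply (isColimitOfPreserves (T.flip.obj (Y.obj d))
    (colimit.isColimit (belowIncl c ⋙ X))).hom_ext
  intro a
  have : ((T.flip.obj (Y.obj d)).mapCocone
      (colimit.cocone (belowIncl c ⋙ X))).ι.app a =
      (T.map (colimit.ι (belowIncl c ⋙ X) a)).app (Y.obj d) := rfl
  erw [this, ← Category.assoc, fromLeft_fac, descFun, colimit.ι_desc]
  dsimp
  erw [dif_pos a.2]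
  dsimp [leftF]
  simp
  rfl

lemma fromRight_descFun (hfg : toLeft T X Y c d ≫ f = toRight T X Y c d ≫ g) :
    fromRight T X Y c d ≫ descFun T X Y c d f g hfg = g := by
  apply (isColimitOfPreserves (T.obj (X.obj c))
    (colimit.isColimit (belowIncl d ⋙ Y))).hom_ext
  intro b
  have : ((T.obj (X.obj c)).mapCocone
      (colimit.cocone (belowIncl d ⋙ Y))).ι.app b =
      (T.obj (X.obj c)).map (colimit.ι (belowIncl d ⋙ Y) b) := rfl
  erw [this, ← Category.assoc, fromRight_fac, descFun, colimit.ι_desc]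
  dsimp
  erw [dif_neg (lt_irrefl c)]
  dsimp [rightF]
  simp
  rfl

lemma descFun_uniq (hfg : toLeft T X Y c d ≫ f = toRight T X Y c d ≫ g)
    (m : cornerObj T X Y c d ⟶ W) (hl : fromLeft T X Y c d ≫ m = f)
    (hr : fromRight T X Y c d ≫ m = g) : m = descFun T X Y c d f g hfg := by
  apply colimit.hom_ext
  intro p
  rw [descFun, colimit.ι_desc]
  dsimp
  by_cases h : p.1.1 < c
  · erw [dif_pos h, key_left T X Y c d p h]
    dsimp [leftF]
    erw [Category.assoc, Category.assoc, hl]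
    rfl
  · erw [dif_neg h, key_right T X Y c d p (snd_lt c d p h)]
    dsimp [rightF]
    erw [Category.assoc, Category.assoc, hr]
    rfl

lemma square_comm :
    toLeft T X Y c d ≫ fromLeft T X Y c d = toRight T X Y c d ≫ fromRight T X Y c d := by
  apply colimit.hom_ext
  intro q
  erw [← Category.assoc, toLeft, colimit.ι_desc, ← Category.assoc, toRight, colimit.ι_desc]
  dsimp
  erw [Category.assoc, fromLeft_fac, Category.assoc, fromRight_fac]
  have hle1 : (⟨q.1, Prod.lt_iff.mpr (Or.inl ⟨q.2.1, q.2.2.le⟩)⟩ :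
      {p : C × D // p < (c, d)}) ≤
      ⟨(q.1.1, d), Prod.lt_iff.mpr (Or.inl ⟨q.2.1, le_rfl⟩)⟩ := ⟨le_rfl, q.2.2.le⟩
  have hle2 : (⟨q.1, Prod.lt_iff.mpr (Or.inl ⟨q.2.1, q.2.2.le⟩)⟩ :
      {p : C × D // p < (c, d)}) ≤
      ⟨(c, q.1.2), Prod.lt_iff.mpr (Or.inr ⟨le_rfl, q.2.2⟩)⟩ := ⟨q.2.1.le, le_rfl⟩
  have h1 := colimit.w (fullDiagram T X Y c d) (homOfLE hle1)
  have h2 := colimit.w (fullDiagram T X Y c d) (homOfLE hle2)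
  rw [fullDiagram_map T X Y c d (homOfLE hle1) le_rfl q.2.2.le] at h1
  rw [fullDiagram_map T X Y c d (homOfLE hle2) q.2.1.le le_rfl] at h2
  simp only [homOfLE_refl, CategoryTheory.Functor.map_id, NatTrans.id_app,
    Category.id_comp, Category.comp_id] at h1 h2
  erw [h1, h2]

end Aux

/-- STATEMENT 2, main theorem: the square
`colim_{a<c,b<d} X a ⊗ Y b → (colim_{a<c} X a) ⊗ Y d, X c ⊗ (colim_{b<d} Y b)
→ colim_{(a,b)<(c,d)} X a ⊗ Y b` (with all canonical maps) is a pushout. -/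
theorem colimit_over_punctured_product_isPushout
    [∀ Z : M, PreservesColimits (T.obj Z)] [∀ Z : M, PreservesColimits (T.flip.obj Z)]
    [Fintype C] [Fintype D] :
    IsPushout (toLeft T X Y c d) (toRight T X Y c d)
      (fromLeft T X Y c d) (fromRight T X Y c d) := by
  have h := IsPushout.of_isColimit
    (c := PushoutCocone.mk _ _ (square_comm T X Y c d))
    (PushoutCocone.IsColimit.mk (square_comm T X Y c d)
      (fun s => descFun T X Y c d s.inl s.inr s.condition)
      (fun s => fromLeft_descFun T X Y c d s.inl s.inr s.condition)
      (fun s => fromRight_descFun T X Y c d s.inl s.inr s.condition)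
      (fun s m h1 h2 => descFun_uniq T X Y c d s.inl s.inr s.condition m h1 h2))
  exact h

end FrankeStmt2
end

section
/- Let M be a model category with a closed symmetric monoidal structure ⊗ satisfying the pushout-product axiom, and let E be a cofibrant object of M. Let f : X → Y and g : U → V be cofibrations in M such that g ⊗ id_E : U ⊗ E → V ⊗ E is a weak equivalence. Then the pushout-product f □ g is a cofibration and (f □ g) ⊗ id_E is a weak equivalence. (Consequently the pushout-product axiom holds for the class of cofibrations of M together with the class of E-equivalences, i.e. the maps h such that h ⊗ id_E is a weak equivalence, which are the weak equivalences of the Bousfield localization of M at E.) -/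
/-!
STATEMENT 3: Let `M` be a model category with a closed symmetric monoidal structure
satisfying the pushout-product axiom, and `E` a cofibrant object.  If `f`, `g` are
cofibrations and `g ⊗ 𝟙_E` is a weak equivalence, then `f □ g` is a cofibration and
`(f □ g) ⊗ 𝟙_E` is a weak equivalence.  (This is the pushout-product axiom for the
Bousfield localization of `M` at `E`.)
-/

open CategoryTheory Limits MonoidalCategory

namespace FrankeStmt3

/-- A (Quillen) model structure on a category `M`. -/
structure ModelStructure (M : Type 1) [Category.{0} M] : Type 1 where
  weq : MorphismProperty M
  cof : MorphismProperty M
  fib : MorphismProperty M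
  weq_id : ∀ X : M, weq (𝟙 X)
  weq_comp : ∀ {X Y Z : M} (f : X ⟶ Y) (g : Y ⟶ Z), weq f → weq g → weq (f ≫ g)
  weq_of_pre : ∀ {X Y Z : M} (f : X ⟶ Y) (g : Y ⟶ Z), weq f → weq (f ≫ g) → weq g
  weq_of_post : ∀ {X Y Z : M} (f : X ⟶ Y) (g : Y ⟶ Z), weq g → weq (f ≫ g) → weq f
  weq_retract : ∀ {X Y X' Y' : M} (f : X ⟶ Y) (g : X' ⟶ Y') (iX : X ⟶ X') (iY : Y ⟶ Y')
    (rX : X' ⟶ X) (rY : Y' ⟶ Y), iX ≫ rX = 𝟙 X → iY ≫ rY = 𝟙 Y →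
    iX ≫ g = f ≫ iY → g ≫ rY = rX ≫ f → weq g → weq f
  cof_retract : ∀ {X Y X' Y' : M} (f : X ⟶ Y) (g : X' ⟶ Y') (iX : X ⟶ X') (iY : Y ⟶ Y')
    (rX : X' ⟶ X) (rY : Y' ⟶ Y), iX ≫ rX = 𝟙 X → iY ≫ rY = 𝟙 Y →
    iX ≫ g = f ≫ iY → g ≫ rY = rX ≫ f → cof g → cof f
  fib_retract : ∀ {X Y X' Y' : M} (f : X ⟶ Y) (g : X' ⟶ Y') (iX : X ⟶ X') (iY : Y ⟶ Y')
    (rX : X' ⟶ X) (rY : Y' ⟶ Y), iX ≫ rX = 𝟙 X → iY ≫ rY = 𝟙 Y →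
    iX ≫ g = f ≫ iY → g ≫ rY = rX ≫ f → fib g → fib f
  lifting_cof_tfib : ∀ {A B X Y : M} (i : A ⟶ B) (p : X ⟶ Y),
    cof i → fib p → weq p → HasLiftingProperty i p
  lifting_tcof_fib : ∀ {A B X Y : M} (i : A ⟶ B) (p : X ⟶ Y),
    cof i → weq i → fib p → HasLiftingProperty i p
  factor_cof_tfib : ∀ {X Y : M} (f : X ⟶ Y), ∃ (Z : M) (i : X ⟶ Z) (p : Z ⟶ Y),
    cof i ∧ fib p ∧ weq p ∧ i ≫ p = f
  factor_tcof_fib : ∀ {X Y : M} (f : X ⟶ Y), ∃ (Z : M) (i : X ⟶ Z) (p : Z ⟶ Y),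
    cof i ∧ weq i ∧ fib p ∧ i ≫ p = f

variable {M : Type 1} [Category.{0} M] [HasColimits M] [MonoidalCategory M]

/-- The pushout-product of two morphisms of `M`. -/
noncomputable def ppM {X Y U V : M} (f : X ⟶ Y) (g : U ⟶ V) :
    pushout (X ◁ g) (f ▷ U) ⟶ Y ⊗ V :=
  pushout.desc (f ▷ V) (Y ◁ g) (whisker_exchange f g)

/-!
In a closed symmetric monoidal category `- ⊗ E` is a left adjoint, so it commutes with pushouts
and `(f □ g) ⊗ E ≅ f □ (g ⊗ E)` as arrows. As `- ⊗ -` also preserves the initial object,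
`g ⊗ E ≅ g □ (∅ → E)`, which is a cofibration when `g` is and `E` is cofibrant. If moreover
`g ⊗ E` is a weak equivalence, the pushout-product axiom makes `f □ (g ⊗ E)`, hence
`(f □ g) ⊗ E`, a weak equivalence.
-/

namespace ModelStructure

variable (MS : ModelStructure M)

instance : MS.weq.IsStableUnderRetracts where
  of_retract h := MS.weq_retract _ _ h.i.left h.i.right h.r.left h.r.right
    h.retract_left h.retract_right h.i_w h.r_w.symm

instance : MS.cof.IsStableUnderRetracts where
  of_retract h := MS.cof_retract _ _ h.i.left h.i.right h.r.left h.r.right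
    h.retract_left h.retract_right h.i_w h.r_w.symm

def PushoutProductAxiom : Prop :=
  ∀ {X Y U V : M} (f : X ⟶ Y) (g : U ⟶ V), MS.cof f → MS.cof g →
    MS.cof (ppM f g) ∧ ((MS.weq f ∨ MS.weq g) → MS.weq (ppM f g))

end ModelStructure

noncomputable def ppM_whiskerRight_arrowIso {X Y U V : M} (f : X ⟶ Y) (g : U ⟶ V) (E : M)
    [PreservesColimit (span (X ◁ g) (f ▷ U)) (tensorRight E)] :
    Arrow.mk (ppM f (g ▷ E)) ≅ Arrow.mk (ppM f g ▷ E) :=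
  Arrow.isoMk' _ _
    (asIso (pushout.map _ _ ((tensorRight E).map (X ◁ g)) ((tensorRight E).map (f ▷ U))
        (α_ X V E).inv (α_ Y U E).inv (α_ X U E).inv (by simp) (by simp)) ≪≫
      PreservesPushout.iso (tensorRight E) (X ◁ g) (f ▷ U))
    (α_ Y V E).symm
    (by
      unfold ppM
      apply pushout.hom_ext
      · simp only [pushout.inl_desc_assoc, Iso.trans_hom, asIso_hom, Category.assoc, Iso.symm_hom]
        rw [PreservesPushout.inl_iso_hom_assoc]
        simp only [Functor.flip_obj_map, curriedTensor_map_app, ← comp_whiskerRight,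
          pushout.inl_desc]
        exact (associator_inv_naturality_left f V E).symm
      · simp only [pushout.inr_desc_assoc, Iso.trans_hom, asIso_hom, Category.assoc, Iso.symm_hom]
        rw [PreservesPushout.inr_iso_hom_assoc]
        simp only [Functor.flip_obj_map, curriedTensor_map_app, ← comp_whiskerRight,
          pushout.inr_desc]
        exact (associator_inv_naturality_middle Y g E).symm)

noncomputable def whiskerRight_arrowIso_ppM_initial {U V : M} (g : U ⟶ V) (E : M)
    [PreservesColimit (Functor.empty.{0} M) (tensorLeft U)]
    [PreservesColimit (Functor.empty.{0} M) (tensorLeft V)] :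
    Arrow.mk (g ▷ E) ≅ Arrow.mk (ppM g (initial.to E)) :=
  have : IsIso (g ▷ (⊥_ M)) :=
    isIso_of_isInitial (isColimitOfHasInitialOfPreservesColimit (tensorLeft U))
      (isColimitOfHasInitialOfPreservesColimit (tensorLeft V)) _
  Arrow.isoMk' _ _ (asIso (pushout.inl _ _)) (Iso.refl _)
    (by unfold ppM; simp only [asIso_hom, pushout.inl_desc, Iso.refl_hom, Category.comp_id])

lemma ModelStructure.cof_whiskerRight_of_cofibrant (MS : ModelStructure M)
    (hpp : MS.PushoutProductAxiom) {E : M} (hE : MS.cof (initial.to E)) {U V : M} {g : U ⟶ V}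
    [PreservesColimit (Functor.empty.{0} M) (tensorLeft U)]
    [PreservesColimit (Functor.empty.{0} M) (tensorLeft V)] (hg : MS.cof g) : MS.cof (g ▷ E) :=
  (MS.cof.arrow_mk_iso_iff (whiskerRight_arrowIso_ppM_initial g E)).2 (hpp g _ hg hE).1

theorem pushout_product_axiom_for_E_local_structure_general
    [MonoidalClosed M] [SymmetricCategory M]
    (MS : ModelStructure M)
    (ppAxiom : ∀ {X Y U V : M} (f : X ⟶ Y) (g : U ⟶ V), MS.cof f → MS.cof g →
      MS.cof (ppM f g) ∧ ((MS.weq f ∨ MS.weq g) → MS.weq (ppM f g)))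
    (E : M) (hE : MS.cof (initial.to E))
    {X Y U V : M} (f : X ⟶ Y) (g : U ⟶ V)
    (hf : MS.cof f) (hg : MS.cof g) (hgE : MS.weq (g ▷ E)) :
    MS.cof (ppM f g) ∧ MS.weq ((ppM f g) ▷ E) := by
  have hgE_cof : MS.cof (g ▷ E) := MS.cof_whiskerRight_of_cofibrant ppAxiom hE hg
  have hfgE : MS.weq (ppM f (g ▷ E)) := (ppAxiom f (g ▷ E) hf hgE_cof).2 (.inr hgE)
  exact ⟨(ppAxiom f g hf hg).1, (MS.weq.arrow_mk_iso_iff (ppM_whiskerRight_arrowIso f g E)).1 hfgE⟩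

theorem pushout_product_axiom_for_E_local_structure
    [HasLimits M] [MonoidalClosed M] [SymmetricCategory M]
    (MS : ModelStructure M)
    (ppAxiom : ∀ {X Y U V : M} (f : X ⟶ Y) (g : U ⟶ V), MS.cof f → MS.cof g →
      MS.cof (ppM f g) ∧ ((MS.weq f ∨ MS.weq g) → MS.weq (ppM f g)))
    (E : M) (hE : MS.cof (initial.to E))
    {X Y U V : M} (f : X ⟶ Y) (g : U ⟶ V)
    (hf : MS.cof f) (hg : MS.cof g) (hgE : MS.weq (g ▷ E)) :
    MS.cof (ppM f g) ∧ MS.weq ((ppM f g) ▷ E) :=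
  pushout_product_axiom_for_E_local_structure_general MS ppAxiom E hE f g hf hg hgE

end FrankeStmt3
end

section
/- Let C and D be model categories, E an arbitrary category, F : C → D a functor sending trivial cofibrations between cofibrant objects to weak equivalences between cofibrant objects, and G : D → E a functor sending trivial cofibrations between cofibrant objects to isomorphisms. Then the total left derived functors LF : Ho(C) → Ho(D), LG : Ho(D) → E and L(G∘F) : Ho(C) → E exist, and the canonical natural transformation ι : LG ∘ LF → L(G∘F) induced by the universal properties of the derived functors is a natural isomorphism; moreover ι is associative up to canonical natural equivalence. -/
/-!
STATEMENT 4: Let `C`, `D` be model categories, `E` a category, `F : C ⥤ D` a functor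
sending trivial cofibrations between cofibrant objects to weak equivalences between
cofibrant objects, and `G : D ⥤ E` a functor sending trivial cofibrations between
cofibrant objects to isomorphisms.  Then the total left derived functors `LF`, `LG`
and `L(G ⋙ F)` exist, and the canonical natural transformation `ι : LF ⋙ LG ⟶ L(F ⋙ G)`
(characterized by the compatibility with the universal natural transformations) is an
isomorphism.

`Ho(M)` is realized as the localization `weq.Localization` at the weak equivalences,
and the total left derived functor as the right Kan extension along the localization
functor, i.e. the terminal pair `(LK, α)`, expressed by the predicate
`IsTotalLeftDerived` below.
-/

open CategoryTheory Limits

namespace FrankeStmt4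

/-- A (Quillen) model structure on a category `M`. -/
structure ModelStructure (M : Type 1) [Category.{0} M] : Type 1 where
  weq : MorphismProperty M
  cof : MorphismProperty M
  fib : MorphismProperty M
  weq_id : ∀ X : M, weq (𝟙 X)
  weq_comp : ∀ {X Y Z : M} (f : X ⟶ Y) (g : Y ⟶ Z), weq f → weq g → weq (f ≫ g)
  weq_of_pre : ∀ {X Y Z : M} (f : X ⟶ Y) (g : Y ⟶ Z), weq f → weq (f ≫ g) → weq g
  weq_of_post : ∀ {X Y Z : M} (f : X ⟶ Y) (g : Y ⟶ Z), weq g → weq (f ≫ g) → weq f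
  weq_retract : ∀ {X Y X' Y' : M} (f : X ⟶ Y) (g : X' ⟶ Y') (iX : X ⟶ X') (iY : Y ⟶ Y')
    (rX : X' ⟶ X) (rY : Y' ⟶ Y), iX ≫ rX = 𝟙 X → iY ≫ rY = 𝟙 Y →
    iX ≫ g = f ≫ iY → g ≫ rY = rX ≫ f → weq g → weq f
  cof_retract : ∀ {X Y X' Y' : M} (f : X ⟶ Y) (g : X' ⟶ Y') (iX : X ⟶ X') (iY : Y ⟶ Y')
    (rX : X' ⟶ X) (rY : Y' ⟶ Y), iX ≫ rX = 𝟙 X → iY ≫ rY = 𝟙 Y →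
    iX ≫ g = f ≫ iY → g ≫ rY = rX ≫ f → cof g → cof f
  fib_retract : ∀ {X Y X' Y' : M} (f : X ⟶ Y) (g : X' ⟶ Y') (iX : X ⟶ X') (iY : Y ⟶ Y')
    (rX : X' ⟶ X) (rY : Y' ⟶ Y), iX ≫ rX = 𝟙 X → iY ≫ rY = 𝟙 Y →
    iX ≫ g = f ≫ iY → g ≫ rY = rX ≫ f → fib g → fib f
  lifting_cof_tfib : ∀ {A B X Y : M} (i : A ⟶ B) (p : X ⟶ Y),
    cof i → fib p → weq p → HasLiftingProperty i p
  lifting_tcof_fib : ∀ {A B X Y : M} (i : A ⟶ B) (p : X ⟶ Y),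
    cof i → weq i → fib p → HasLiftingProperty i p
  factor_cof_tfib : ∀ {X Y : M} (f : X ⟶ Y), ∃ (Z : M) (i : X ⟶ Z) (p : Z ⟶ Y),
    cof i ∧ fib p ∧ weq p ∧ i ≫ p = f
  factor_tcof_fib : ∀ {X Y : M} (f : X ⟶ Y), ∃ (Z : M) (i : X ⟶ Z) (p : Z ⟶ Y),
    cof i ∧ weq i ∧ fib p ∧ i ≫ p = f

/-- `(LK, α)` is the total left derived functor of `K : C' ⥤ E` along the localization
functor `L : C' ⥤ H`, i.e. the terminal functor equipped with a natural transformation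
`L ⋙ LK ⟶ K` (the right Kan extension of `K` along `L`). -/
def IsTotalLeftDerived {C' H E : Type*} [Category C'] [Category H] [Category E]
    (L : C' ⥤ H) (K : C' ⥤ E) (LK : H ⥤ E) (α : L ⋙ LK ⟶ K) : Prop :=
  ∀ (G : H ⥤ E) (β : L ⋙ G ⟶ K), ∃! τ : G ⟶ LK, Functor.whiskerLeft L τ ≫ α = β

section ModelLemmas

variable {M : Type 1} [Category.{0} M] [HasColimits M] (MS : ModelStructure M)

/-- `X` is cofibrant. -/
def Cofibrant (X : M) : Prop := MS.cof (initial.to X)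

lemma cof_of_llp {X Y : M} (f : X ⟶ Y)
    (h : ∀ {Z W : M} (p : Z ⟶ W), MS.fib p → MS.weq p → HasLiftingProperty f p) :
    MS.cof f := by
  obtain ⟨Z, i, p, hi, hpf, hpw, hfac⟩ := MS.factor_cof_tfib f
  haveI := h p hpf hpw
  have sq : CommSq i f p (𝟙 Y) := ⟨by simp [hfac]⟩
  exact MS.cof_retract f i (𝟙 X) sq.lift (𝟙 X) p (by simp) (by simp [sq.fac_right])
    (by simp [sq.fac_left]) (by simp [hfac]) hi

lemma cof_id (X : M) : MS.cof (𝟙 X) :=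
  cof_of_llp MS _ (fun p _ _ => inferInstance)

lemma cof_comp {X Y Z : M} (f : X ⟶ Y) (g : Y ⟶ Z) (hf : MS.cof f) (hg : MS.cof g) :
    MS.cof (f ≫ g) :=
  cof_of_llp MS _ (fun p hpf hpw => by
    haveI := MS.lifting_cof_tfib f p hf hpf hpw
    haveI := MS.lifting_cof_tfib g p hg hpf hpw
    infer_instance)

lemma cof_inl (A B : M) (hB : Cofibrant MS B) :
    MS.cof (coprod.inl : A ⟶ A ⨿ B) := by
  apply cof_of_llp
  intro Z W p hpf hpw
  constructor
  intro t b sq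
  haveI := MS.lifting_cof_tfib (initial.to B) p hB hpf hpw
  have sqB : CommSq (initial.to Z) (initial.to B) p (coprod.inr ≫ b) :=
    ⟨initial.hom_ext _ _⟩
  exact CommSq.HasLift.mk' ⟨coprod.desc t sqB.lift, by simp [coprod.inl_desc], by
    apply coprod.hom_ext
    · simpa [coprod.inl_desc] using sq.w
    · simpa [coprod.inr_desc] using sqB.fac_right⟩

lemma cof_inr (A B : M) (hA : Cofibrant MS A) :
    MS.cof (coprod.inr : B ⟶ A ⨿ B) := by
  apply cof_of_llp
  intro Z W p hpf hpw
  constructor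
  intro t b sq
  haveI := MS.lifting_cof_tfib (initial.to A) p hA hpf hpw
  have sqA : CommSq (initial.to Z) (initial.to A) p (coprod.inl ≫ b) :=
    ⟨initial.hom_ext _ _⟩
  exact CommSq.HasLift.mk' ⟨coprod.desc sqA.lift t, by simp [coprod.inr_desc], by
    apply coprod.hom_ext
    · simpa [coprod.inl_desc] using sqA.fac_right
    · simpa [coprod.inr_desc] using sq.w⟩

lemma cofibrant_coprod (A B : M) (hA : Cofibrant MS A) (hB : Cofibrant MS B) :
    Cofibrant MS (A ⨿ B) := by
  have : initial.to (A ⨿ B) = initial.to A ≫ coprod.inl := initial.hom_ext _ _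
  rw [Cofibrant, this]
  exact cof_comp MS _ _ hA (cof_inl MS A B hB)

end ModelLemmas

section KenBrown

variable {M : Type 1} [Category.{0} M] [HasColimits M] (MS : ModelStructure M)
variable {E' : Type*} [Category E'] (H : M ⥤ E')
variable (hH : ∀ {X Y : M} (f : X ⟶ Y), Cofibrant MS X → Cofibrant MS Y →
    MS.cof f → MS.weq f → IsIso (H.map f))

include hH

/-- Ken Brown's lemma. -/
lemma kenBrown {A B : M} (f : A ⟶ B) (hA : Cofibrant MS A) (hB : Cofibrant MS B)
    (hf : MS.weq f) : IsIso (H.map f) := by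
  obtain ⟨Z, q, p, hq, hpf, hpw, hfac⟩ := MS.factor_cof_tfib (coprod.desc f (𝟙 B))
  have hZ : Cofibrant MS Z := by
    have : initial.to Z = initial.to (A ⨿ B) ≫ q := initial.hom_ext _ _
    rw [Cofibrant, this]
    exact cof_comp MS _ _ (cofibrant_coprod MS A B hA hB) hq
  have hj₁p : (coprod.inl ≫ q) ≫ p = f := by rw [Category.assoc, hfac]; simp [coprod.inl_desc]
  have hj₂p : (coprod.inr ≫ q) ≫ p = 𝟙 B := by rw [Category.assoc, hfac]; simp [coprod.inr_desc]
  have hj₁w : MS.weq (coprod.inl ≫ q) :=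
    MS.weq_of_post _ p hpw (by rw [hj₁p]; exact hf)
  have hj₂w : MS.weq (coprod.inr ≫ q) :=
    MS.weq_of_post _ p hpw (by rw [hj₂p]; exact MS.weq_id B)
  have hj₁c : MS.cof (coprod.inl ≫ q) := cof_comp MS _ _ (cof_inl MS A B hB) hq
  have hj₂c : MS.cof (coprod.inr ≫ q) := cof_comp MS _ _ (cof_inr MS A B hA) hq
  haveI i₁ : IsIso (H.map (coprod.inl ≫ q)) := hH _ hA hZ hj₁c hj₁w
  haveI i₂ : IsIso (H.map (coprod.inr ≫ q)) := hH _ hB hZ hj₂c hj₂w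
  haveI : IsIso (H.map (coprod.inr ≫ q) ≫ H.map p) := by
    rw [← H.map_comp, hj₂p, H.map_id]; infer_instance
  haveI : IsIso (H.map p) := IsIso.of_isIso_comp_left (H.map (coprod.inr ≫ q)) (H.map p)
  rw [show f = (coprod.inl ≫ q) ≫ p from hj₁p.symm, H.map_comp]
  infer_instance

/-- Key fact: `H` identifies morphisms from a cofibrant object which become equal
after composing with a trivial fibration. -/
lemma map_eq {A Z X : M} (hA : Cofibrant MS A) (g h : A ⟶ Z) (p : Z ⟶ X)
    (hpf : MS.fib p) (hpw : MS.weq p) (hE : g ≫ p = h ≫ p) : H.map g = H.map h := by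
  obtain ⟨Cyl, j, r, hj, hrf, hrw, hfold⟩ := MS.factor_cof_tfib (coprod.desc (𝟙 A) (𝟙 A))
  haveI := MS.lifting_cof_tfib j p hj hpf hpw
  have hfold₁ : (coprod.inl ≫ j) ≫ r = 𝟙 A := by rw [Category.assoc, hfold]; simp [coprod.inl_desc]
  have hfold₂ : (coprod.inr ≫ j) ≫ r = 𝟙 A := by rw [Category.assoc, hfold]; simp [coprod.inr_desc]
  have sq : CommSq (coprod.desc g h) j p (r ≫ g ≫ p) := ⟨by
    apply coprod.hom_ext
    · simp [← Category.assoc, hfold₁, coprod.inl_desc]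
    · simp only [coprod.inr_desc, ← Category.assoc, hfold₂]
      rw [Category.id_comp, hE]⟩
  have hCyl : Cofibrant MS Cyl := by
    have : initial.to Cyl = initial.to (A ⨿ A) ≫ j := initial.hom_ext _ _
    rw [Cofibrant, this]
    exact cof_comp MS _ _ (cofibrant_coprod MS A A hA hA) hj
  have hi₀c : MS.cof (coprod.inl ≫ j) := cof_comp MS _ _ (cof_inl MS A A hA) hj
  have hi₁c : MS.cof (coprod.inr ≫ j) := cof_comp MS _ _ (cof_inr MS A A hA) hj
  have hi₀w : MS.weq (coprod.inl ≫ j) :=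
    MS.weq_of_post _ r hrw (by rw [hfold₁]; exact MS.weq_id A)
  have hi₁w : MS.weq (coprod.inr ≫ j) :=
    MS.weq_of_post _ r hrw (by rw [hfold₂]; exact MS.weq_id A)
  haveI i₀ : IsIso (H.map (coprod.inl ≫ j)) := hH _ hA hCyl hi₀c hi₀w
  haveI i₁ : IsIso (H.map (coprod.inr ≫ j)) := hH _ hA hCyl hi₁c hi₁w
  haveI : IsIso (H.map (coprod.inl ≫ j) ≫ H.map r) := by
    rw [← H.map_comp, hfold₁, H.map_id]; infer_instance
  haveI : IsIso (H.map r) := IsIso.of_isIso_comp_left (H.map (coprod.inl ≫ j)) (H.map r)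
  have e : H.map (coprod.inl ≫ j) = H.map (coprod.inr ≫ j) := by
    rw [← cancel_mono (H.map r), ← H.map_comp, ← H.map_comp, hfold₁, hfold₂]
  have hg : g = (coprod.inl ≫ j) ≫ sq.lift := by rw [Category.assoc, sq.fac_left]; simp [coprod.inl_desc]
  have hh : h = (coprod.inr ≫ j) ≫ sq.lift := by rw [Category.assoc, sq.fac_left]; simp [coprod.inr_desc]
  calc H.map g = H.map ((coprod.inl ≫ j) ≫ sq.lift) := congrArg H.map hg
    _ = H.map (coprod.inl ≫ j) ≫ H.map sq.lift := H.map_comp _ _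
    _ = H.map (coprod.inr ≫ j) ≫ H.map sq.lift := by rw [e]
    _ = H.map ((coprod.inr ≫ j) ≫ sq.lift) := (H.map_comp _ _).symm
    _ = H.map h := (congrArg H.map hh).symm

end KenBrown

section Replacement

variable {M : Type 1} [Category.{0} M] [HasColimits M] (MS : ModelStructure M)

lemma exists_cofRep (X : M) : ∃ (Z : M) (p : Z ⟶ X),
    MS.cof (initial.to Z) ∧ MS.fib p ∧ MS.weq p := by
  obtain ⟨Z, i, p, hi, hpf, hpw, _⟩ := MS.factor_cof_tfib (initial.to X)
  exact ⟨Z, p, by rwa [show initial.to Z = i from initial.hom_ext _ _], hpf, hpw⟩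

/-- A choice of cofibrant replacement object. -/
noncomputable def Qobj (X : M) : M := (exists_cofRep MS X).choose

/-- The trivial fibration from the cofibrant replacement. -/
noncomputable def Qp (X : M) : Qobj MS X ⟶ X := (exists_cofRep MS X).choose_spec.choose

lemma Qobj_cofibrant (X : M) : Cofibrant MS (Qobj MS X) :=
  (exists_cofRep MS X).choose_spec.choose_spec.1

lemma Qp_fib (X : M) : MS.fib (Qp MS X) :=
  (exists_cofRep MS X).choose_spec.choose_spec.2.1

lemma Qp_weq (X : M) : MS.weq (Qp MS X) :=
  (exists_cofRep MS X).choose_spec.choose_spec.2.2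

lemma exists_Qlift {X Y : M} (f : X ⟶ Y) :
    ∃ l : Qobj MS X ⟶ Qobj MS Y, l ≫ Qp MS Y = Qp MS X ≫ f := by
  haveI := MS.lifting_cof_tfib (initial.to (Qobj MS X)) (Qp MS Y)
    (Qobj_cofibrant MS X) (Qp_fib MS Y) (Qp_weq MS Y)
  have sq : CommSq (initial.to (Qobj MS Y)) (initial.to (Qobj MS X)) (Qp MS Y)
      (Qp MS X ≫ f) := ⟨initial.hom_ext _ _⟩
  exact ⟨sq.lift, sq.fac_right⟩

/-- A choice of lift of `f` to the cofibrant replacements. -/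
noncomputable def Qlift {X Y : M} (f : X ⟶ Y) : Qobj MS X ⟶ Qobj MS Y :=
  (exists_Qlift MS f).choose

lemma Qlift_p {X Y : M} (f : X ⟶ Y) : Qlift MS f ≫ Qp MS Y = Qp MS X ≫ f :=
  (exists_Qlift MS f).choose_spec

lemma Qlift_p_assoc {X Y W : M} (f : X ⟶ Y) (h : Y ⟶ W) :
    Qlift MS f ≫ Qp MS Y ≫ h = Qp MS X ≫ f ≫ h := by
  rw [← Category.assoc, Qlift_p, Category.assoc]

lemma Qlift_weq {X Y : M} (f : X ⟶ Y) (hf : MS.weq f) : MS.weq (Qlift MS f) :=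
  MS.weq_of_post _ (Qp MS Y) (Qp_weq MS Y)
    (by rw [Qlift_p]; exact MS.weq_comp _ _ (Qp_weq MS X) hf)

end Replacement

section Derived

variable {M : Type 1} [Category.{0} M] [HasColimits M] (MS : ModelStructure M)
variable {E' : Type*} [Category E'] (H : M ⥤ E')
variable (hH : ∀ {X Y : M} (f : X ⟶ Y), Cofibrant MS X → Cofibrant MS Y →
    MS.cof f → MS.weq f → IsIso (H.map f))

/-- The functor `X ↦ H (Q X)`. -/
@[simps]
noncomputable def barFunctor : M ⥤ E' where
  obj X := H.obj (Qobj MS X)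
  map f := H.map (Qlift MS f)
  map_id X := by
    rw [map_eq MS H hH (Qobj_cofibrant MS X) (Qlift MS (𝟙 X)) (𝟙 (Qobj MS X))
      (Qp MS X) (Qp_fib MS X) (Qp_weq MS X) (by rw [Qlift_p]; simp), H.map_id]
  map_comp {X Y Z} f g := by
    rw [← H.map_comp]
    exact map_eq MS H hH (Qobj_cofibrant MS X) _ _ (Qp MS Z) (Qp_fib MS Z) (Qp_weq MS Z)
      (by simp [Qlift_p, Qlift_p_assoc])

lemma barFunctor_inverts : MS.weq.IsInvertedBy (barFunctor MS H hH) := by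
  intro X Y f hf
  exact kenBrown MS H hH (Qlift MS f) (Qobj_cofibrant MS X) (Qobj_cofibrant MS Y)
    (Qlift_weq MS f hf)

/-- The total left derived functor of `H`. -/
noncomputable def LH : MS.weq.Localization ⥤ E' :=
  Localization.lift (barFunctor MS H hH) (barFunctor_inverts MS H hH) MS.weq.Q

/-- The transformation from `bar H` to `H` given by the replacement maps. -/
@[simps]
noncomputable def pNat : barFunctor MS H hH ⟶ H where
  app X := H.map (Qp MS X)
  naturality X Y f := by
    change H.map (Qlift MS f) ≫ H.map (Qp MS Y) = H.map (Qp MS X) ≫ H.map f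
    rw [← H.map_comp, ← H.map_comp, Qlift_p]

noncomputable instance LHlifting :
    Localization.Lifting MS.weq.Q MS.weq (barFunctor MS H hH) (LH MS H hH) :=
  Localization.liftingLift _ _ _

/-- The universal transformation of the total left derived functor. -/
noncomputable def βH : MS.weq.Q ⋙ LH MS H hH ⟶ H :=
  (Localization.Lifting.iso MS.weq.Q MS.weq (barFunctor MS H hH) (LH MS H hH)).hom ≫
    pNat MS H hH

lemma βH_app (X : M) : (βH MS H hH).app X =
    (Localization.Lifting.iso MS.weq.Q MS.weq (barFunctor MS H hH)
      (LH MS H hH)).hom.app X ≫ H.map (Qp MS X) := rfl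

lemma βH_app_isIso (X : M) (hX : Cofibrant MS X) : IsIso ((βH MS H hH).app X) := by
  rw [βH_app]
  haveI : IsIso (H.map (Qp MS X)) :=
    kenBrown MS H hH (Qp MS X) (Qobj_cofibrant MS X) hX (Qp_weq MS X)
  exact IsIso.comp_isIso' (NatIso.hom_app_isIso _ X) this

end Derived

section TLD

variable {M : Type 1} [Category.{0} M] [HasColimits M] (MS : ModelStructure M)
variable {E' : Type*} [Category E'] (H : M ⥤ E')
variable (hH : ∀ {X Y : M} (f : X ⟶ Y), Cofibrant MS X → Cofibrant MS Y →
    MS.cof f → MS.weq f → IsIso (H.map f))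

lemma Q_map_isIso {X Y : M} (w : X ⟶ Y) (hw : MS.weq w) : IsIso (MS.weq.Q.map w) :=
  Localization.inverts MS.weq.Q MS.weq w hw

/-- Any transformation `Q ⋙ T ⟶ H` factors through `βH` via a comparison `σ` at the
level of `M`. -/
@[simps]
noncomputable def sigmaNat (T : MS.weq.Localization ⥤ E') (τ0 : MS.weq.Q ⋙ T ⟶ H) :
    MS.weq.Q ⋙ T ⟶ barFunctor MS H hH where
  app X :=
    haveI := Q_map_isIso MS (Qp MS X) (Qp_weq MS X)
    inv (T.map (MS.weq.Q.map (Qp MS X))) ≫ τ0.app (Qobj MS X)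
  naturality X Y f := by
    haveI := Q_map_isIso MS (Qp MS X) (Qp_weq MS X)
    haveI := Q_map_isIso MS (Qp MS Y) (Qp_weq MS Y)
    change T.map (MS.weq.Q.map f) ≫ inv (T.map (MS.weq.Q.map (Qp MS Y))) ≫ τ0.app (Qobj MS Y) =
      (inv (T.map (MS.weq.Q.map (Qp MS X))) ≫ τ0.app (Qobj MS X)) ≫ H.map (Qlift MS f)
    rw [← cancel_epi (T.map (MS.weq.Q.map (Qp MS X)))]
    simp only [Category.assoc, IsIso.hom_inv_id_assoc]
    rw [← Category.assoc, ← T.map_comp, ← MS.weq.Q.map_comp,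
      show Qp MS X ≫ f = Qlift MS f ≫ Qp MS Y from (Qlift_p MS f).symm,
      MS.weq.Q.map_comp, T.map_comp, Category.assoc, IsIso.hom_inv_id_assoc]
    exact τ0.naturality (Qlift MS f)

theorem isTLD : IsTotalLeftDerived MS.weq.Q H (LH MS H hH) (βH MS H hH) := by
  intro T τ0
  haveI : ∀ X : M, IsIso (MS.weq.Q.map (Qp MS X)) :=
    fun X => Q_map_isIso MS (Qp MS X) (Qp_weq MS X)
  let τ : T ⟶ LH MS H hH :=
    Localization.liftNatTrans MS.weq.Q MS.weq (MS.weq.Q ⋙ T) (barFunctor MS H hH)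
      T (LH MS H hH) (sigmaNat MS H hH T τ0)
  have compat : Functor.whiskerLeft MS.weq.Q τ ≫ βH MS H hH = τ0 := by
    ext X
    have happ := Localization.liftNatTrans_app MS.weq.Q MS.weq (MS.weq.Q ⋙ T)
      (barFunctor MS H hH) T (LH MS H hH) (sigmaNat MS H hH T τ0) X
    dsimp [τ]
    rw [happ, Localization.Lifting.compLeft_iso]
    dsimp [βH]
    simp only [Category.id_comp, Category.assoc, Iso.inv_hom_id_app_assoc,
      sigmaNat_app, pNat_app]
    have := τ0.naturality (Qp MS X)
    dsimp at this
    erw [Iso.inv_hom_id_app_assoc, Category.assoc, ← this, IsIso.inv_hom_id_assoc]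
  have key : ∀ (τ₁ τ₂ : T ⟶ LH MS H hH), Functor.whiskerLeft MS.weq.Q τ₁ ≫ βH MS H hH = τ0 →
      Functor.whiskerLeft MS.weq.Q τ₂ ≫ βH MS H hH = τ0 → τ₁ = τ₂ := by
    intro τ₁ τ₂ h₁ h₂
    refine Localization.natTrans_ext MS.weq.Q MS.weq (fun X => ?_)
    haveI : IsIso ((βH MS H hH).app (Qobj MS X)) :=
      βH_app_isIso MS H hH _ (Qobj_cofibrant MS X)
    haveI : IsIso (MS.weq.Q.map (Qp MS X)) := Q_map_isIso MS _ (Qp_weq MS X)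
    have e1 : τ₁.app (MS.weq.Q.obj (Qobj MS X)) = τ₂.app (MS.weq.Q.obj (Qobj MS X)) := by
      have c1 := NatTrans.congr_app h₁ (Qobj MS X)
      have c2 := NatTrans.congr_app h₂ (Qobj MS X)
      dsimp at c1 c2
      rw [← cancel_mono ((βH MS H hH).app (Qobj MS X)), c1, c2]
    rw [← cancel_epi (T.map (MS.weq.Q.map (Qp MS X))), τ₁.naturality (MS.weq.Q.map (Qp MS X)),
      τ₂.naturality (MS.weq.Q.map (Qp MS X)), e1]
  exact ⟨τ, compat, fun τ' h' => key τ' τ h' compat⟩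

end TLD

section Formal

variable {C' H E : Type*} [Category C'] [Category H] [Category E]
variable (L : C' ⥤ H) (K : C' ⥤ E)

lemma TLD_transfer {K₂ : H ⥤ E} {α₂ : L ⋙ K₂ ⟶ K}
    (h₂ : IsTotalLeftDerived L K K₂ α₂) {K₁ : H ⥤ E} (e : K₁ ⟶ K₂) [IsIso e]
    {α₁ : L ⋙ K₁ ⟶ K} (he : Functor.whiskerLeft L e ≫ α₂ = α₁) :
    IsTotalLeftDerived L K K₁ α₁ := by
  intro G' β'
  obtain ⟨τ, hτ, huniq⟩ := h₂ G' β'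
  have hinv : Functor.whiskerLeft L (inv e) ≫ α₁ = α₂ := by
    rw [← he, ← Category.assoc, ← Functor.whiskerLeft_comp, IsIso.inv_hom_id, Functor.whiskerLeft_id',
      Category.id_comp]
  refine ⟨τ ≫ inv e, ?_, ?_⟩
  · dsimp only
    rw [Functor.whiskerLeft_comp, Category.assoc, hinv, hτ]
  · intro τ₁ hτ₁
    have : τ₁ ≫ e = τ := huniq (τ₁ ≫ e) (by
      dsimp only
      rw [Functor.whiskerLeft_comp, Category.assoc, he, hτ₁])
    rw [← this, Category.assoc, IsIso.hom_inv_id, Category.comp_id]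

lemma TLD_comparison_isIso {K₁ K₂ : H ⥤ E} {α₁ : L ⋙ K₁ ⟶ K} {α₂ : L ⋙ K₂ ⟶ K}
    (h₁ : IsTotalLeftDerived L K K₁ α₁) (h₂ : IsTotalLeftDerived L K K₂ α₂)
    (τ : K₁ ⟶ K₂) (hτ : Functor.whiskerLeft L τ ≫ α₂ = α₁) : IsIso τ := by
  obtain ⟨τ', hτ', _⟩ := h₁ K₂ α₂
  obtain ⟨σ₁, hσ₁, hu₁⟩ := h₁ K₁ α₁
  obtain ⟨σ₂, hσ₂, hu₂⟩ := h₂ K₂ α₂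
  have e1 : τ ≫ τ' = 𝟙 K₁ := by
    rw [hu₁ (τ ≫ τ') (by dsimp only; rw [Functor.whiskerLeft_comp, Category.assoc, hτ', hτ]),
      ← hu₁ (𝟙 K₁) (by dsimp only; simp)]
  have e2 : τ' ≫ τ = 𝟙 K₂ := by
    rw [hu₂ (τ' ≫ τ) (by dsimp only; rw [Functor.whiskerLeft_comp, Category.assoc, hτ, hτ']),
      ← hu₂ (𝟙 K₂) (by dsimp only; simp)]
  exact ⟨τ', e1, e2⟩

end Formal

theorem derived_functor_of_composition
    {C D E : Type 1} [Category.{0} C] [Category.{0} D] [Category.{0} E]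
    [HasLimits C] [HasColimits C] [HasLimits D] [HasColimits D]
    (MSC : ModelStructure C) (MSD : ModelStructure D)
    (F : C ⥤ D) (G : D ⥤ E)
    (hF : ∀ {X Y : C} (f : X ⟶ Y),
      MSC.cof (initial.to X) → MSC.cof (initial.to Y) → MSC.cof f → MSC.weq f →
        (MSD.weq (F.map f) ∧ MSD.cof (initial.to (F.obj X)) ∧
          MSD.cof (initial.to (F.obj Y))))
    (hG : ∀ {X Y : D} (f : X ⟶ Y),
      MSD.cof (initial.to X) → MSD.cof (initial.to Y) → MSD.cof f → MSD.weq f →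
        IsIso (G.map f)) :
    (∃ (LF : MSC.weq.Localization ⥤ MSD.weq.Localization)
        (α : MSC.weq.Q ⋙ LF ⟶ F ⋙ MSD.weq.Q),
        IsTotalLeftDerived MSC.weq.Q (F ⋙ MSD.weq.Q) LF α) ∧
    (∃ (LG : MSD.weq.Localization ⥤ E) (β : MSD.weq.Q ⋙ LG ⟶ G),
        IsTotalLeftDerived MSD.weq.Q G LG β) ∧
    (∃ (LGF : MSC.weq.Localization ⥤ E) (δ : MSC.weq.Q ⋙ LGF ⟶ F ⋙ G),
        IsTotalLeftDerived MSC.weq.Q (F ⋙ G) LGF δ) ∧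
    (∀ (LF : MSC.weq.Localization ⥤ MSD.weq.Localization)
        (α : MSC.weq.Q ⋙ LF ⟶ F ⋙ MSD.weq.Q)
        (_ : IsTotalLeftDerived MSC.weq.Q (F ⋙ MSD.weq.Q) LF α)
        (LG : MSD.weq.Localization ⥤ E) (β : MSD.weq.Q ⋙ LG ⟶ G)
        (_ : IsTotalLeftDerived MSD.weq.Q G LG β)
        (LGF : MSC.weq.Localization ⥤ E) (δ : MSC.weq.Q ⋙ LGF ⟶ F ⋙ G)
        (_ : IsTotalLeftDerived MSC.weq.Q (F ⋙ G) LGF δ)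
        (ι : LF ⋙ LG ⟶ LGF),
        Functor.whiskerLeft MSC.weq.Q ι ≫ δ = Functor.whiskerRight α LG ≫ Functor.whiskerLeft F β →
          IsIso ι) := by
  have hGiso : ∀ {X Y : D} (f : X ⟶ Y), Cofibrant MSD X → Cofibrant MSD Y →
      MSD.cof f → MSD.weq f → IsIso (G.map f) := fun f hX hY hc hw => hG f hX hY hc hw
  have hHF : ∀ {X Y : C} (f : X ⟶ Y), Cofibrant MSC X → Cofibrant MSC Y →
      MSC.cof f → MSC.weq f → IsIso ((F ⋙ MSD.weq.Q).map f) := by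
    intro X Y f hX hY hc hw
    exact Q_map_isIso MSD (F.map f) (hF f hX hY hc hw).1
  have hHFG : ∀ {X Y : C} (f : X ⟶ Y), Cofibrant MSC X → Cofibrant MSC Y →
      MSC.cof f → MSC.weq f → IsIso ((F ⋙ G).map f) := by
    intro X Y f hX hY hc hw
    obtain ⟨hw', hcx, hcy⟩ := hF f hX hY hc hw
    exact kenBrown MSD G hGiso (F.map f) hcx hcy hw'
  refine ⟨⟨LH MSC (F ⋙ MSD.weq.Q) hHF, βH MSC (F ⋙ MSD.weq.Q) hHF,
      isTLD MSC (F ⋙ MSD.weq.Q) hHF⟩,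
    ⟨LH MSD G hGiso, βH MSD G hGiso, isTLD MSD G hGiso⟩,
    ⟨LH MSC (F ⋙ G) hHFG, βH MSC (F ⋙ G) hHFG, isTLD MSC (F ⋙ G) hHFG⟩, ?_⟩
  intro LF α hα LG β hβ LGF δ hδ ι hι
  -- the comparison isomorphism between the concrete composite and L(F ⋙ G)
  haveI hFQcof : ∀ X : C, Cofibrant MSD (F.obj (Qobj MSC X)) := fun X =>
    (hF (𝟙 (Qobj MSC X)) (Qobj_cofibrant MSC X) (Qobj_cofibrant MSC X)
      (cof_id MSC _) (MSC.weq_id _)).2.1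
  haveI : ∀ X : C, IsIso ((βH MSD G hGiso).app (F.obj (Qobj MSC X))) := fun X =>
    βH_app_isIso MSD G hGiso _ (hFQcof X)
  let eIso : barFunctor MSC (F ⋙ MSD.weq.Q) hHF ⋙ (LH MSD G hGiso) ≅ barFunctor MSC (F ⋙ G) hHFG :=
    NatIso.ofComponents (fun X => @asIso _ _ _ _ ((βH MSD G hGiso).app (F.obj (Qobj MSC X))) (this X))
      (fun {X Y} f => by exact (βH MSD G hGiso).naturality (F.map (Qlift MSC f)))
  let e : (LH MSC (F ⋙ MSD.weq.Q) hHF) ⋙ (LH MSD G hGiso) ⟶ (LH MSC (F ⋙ G) hHFG) :=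
    (Localization.liftNatIso MSC.weq.Q MSC.weq
      (barFunctor MSC (F ⋙ MSD.weq.Q) hHF ⋙ (LH MSD G hGiso)) (barFunctor MSC (F ⋙ G) hHFG)
      ((LH MSC (F ⋙ MSD.weq.Q) hHF) ⋙ (LH MSD G hGiso)) (LH MSC (F ⋙ G) hHFG) eIso).hom
  haveI : IsIso e := by dsimp only [e]; infer_instance
  have compat_e : Functor.whiskerLeft MSC.weq.Q e ≫ (βH MSC (F ⋙ G) hHFG) = Functor.whiskerRight (βH MSC (F ⋙ MSD.weq.Q) hHF) (LH MSD G hGiso) ≫ Functor.whiskerLeft F (βH MSD G hGiso) := by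
    ext X
    dsimp only [e, NatTrans.comp_app, Functor.whiskerLeft_app, Functor.whiskerRight_app]
    rw [show (Localization.liftNatIso MSC.weq.Q MSC.weq
      (barFunctor MSC (F ⋙ MSD.weq.Q) hHF ⋙ (LH MSD G hGiso)) (barFunctor MSC (F ⋙ G) hHFG)
      ((LH MSC (F ⋙ MSD.weq.Q) hHF) ⋙ (LH MSD G hGiso)) (LH MSC (F ⋙ G) hHFG) eIso).hom.app (MSC.weq.Q.obj X) = _ from
      Localization.liftNatTrans_app _ _ _ _ _ _ eIso.hom X]
    rw [βH_app MSC (F ⋙ G) hHFG X, βH_app MSC (F ⋙ MSD.weq.Q) hHF X]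
    simp only [Category.assoc, Iso.inv_hom_id_app_assoc, Functor.map_comp,
      Functor.comp_map, NatIso.ofComponents_hom_app, asIso_hom, eIso]
    rw [show (Localization.Lifting.iso MSC.weq.Q MSC.weq
        (barFunctor MSC (F ⋙ MSD.weq.Q) hHF ⋙ (LH MSD G hGiso))
        ((LH MSC (F ⋙ MSD.weq.Q) hHF) ⋙ (LH MSD G hGiso))).hom.app X =
      (LH MSD G hGiso).map ((Localization.Lifting.iso MSC.weq.Q MSC.weq
        (barFunctor MSC (F ⋙ MSD.weq.Q) hHF)
        (LH MSC (F ⋙ MSD.weq.Q) hHF)).hom.app X) from rfl]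
    have n := (βH MSD G hGiso).naturality (F.map (Qp MSC X))
    have c := (Localization.Lifting.iso MSC.weq.Q MSC.weq (barFunctor MSC (F ⋙ G) hHFG)
      (LH MSC (F ⋙ G) hHFG)).inv_hom_id_app_assoc X (G.map (F.map (Qp MSC X)))
    exact (whisker_eq _ ((whisker_eq _ c).trans n.symm)).trans
      ((Category.assoc _ _ _).symm.trans (eq_whisker ((LH MSD G hGiso).map_comp _ _).symm _))
  have TLD₀ : IsTotalLeftDerived MSC.weq.Q (F ⋙ G) ((LH MSC (F ⋙ MSD.weq.Q) hHF) ⋙ (LH MSD G hGiso))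
      (Functor.whiskerRight (βH MSC (F ⋙ MSD.weq.Q) hHF) (LH MSD G hGiso) ≫ Functor.whiskerLeft F (βH MSD G hGiso)) :=
    TLD_transfer MSC.weq.Q (F ⋙ G) (isTLD MSC (F ⋙ G) hHFG) e compat_e
  -- comparisons with the abstract derived functors
  obtain ⟨u, hu, -⟩ := isTLD MSC (F ⋙ MSD.weq.Q) hHF LF α
  haveI : IsIso u := TLD_comparison_isIso MSC.weq.Q (F ⋙ MSD.weq.Q) hα
    (isTLD MSC (F ⋙ MSD.weq.Q) hHF) u hu
  obtain ⟨v, hv, -⟩ := isTLD MSD G hGiso LG β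
  haveI : IsIso v := TLD_comparison_isIso MSD.weq.Q G hβ (isTLD MSD G hGiso) v hv
  let e' : LF ⋙ LG ⟶ (LH MSC (F ⋙ MSD.weq.Q) hHF) ⋙ (LH MSD G hGiso) := Functor.whiskerRight u LG ≫ Functor.whiskerLeft (LH MSC (F ⋙ MSD.weq.Q) hHF) v
  haveI : IsIso (Functor.whiskerRight u LG) := by
    apply NatIso.isIso_of_isIso_app
  haveI : IsIso (Functor.whiskerLeft (LH MSC (F ⋙ MSD.weq.Q) hHF) v) := by
    apply NatIso.isIso_of_isIso_app
  haveI : IsIso e' := by dsimp only [e']; infer_instance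
  have compat_e' : Functor.whiskerLeft MSC.weq.Q e' ≫ (Functor.whiskerRight (βH MSC (F ⋙ MSD.weq.Q) hHF) (LH MSD G hGiso) ≫ Functor.whiskerLeft F (βH MSD G hGiso)) =
      Functor.whiskerRight α LG ≫ Functor.whiskerLeft F β := by
    ext X
    dsimp only [e', NatTrans.comp_app, Functor.whiskerLeft_app, Functor.whiskerRight_app]
    have n := v.naturality ((βH MSC (F ⋙ MSD.weq.Q) hHF).app X)
    have c1 := NatTrans.congr_app hv (F.obj X)
    have c2 := NatTrans.congr_app hu X
    simp only [NatTrans.comp_app, Functor.whiskerLeft_app, Functor.whiskerRight_app,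
      Functor.comp_obj] at n c1 c2 ⊢
    simp only [Category.assoc]
    rw [← reassoc_of% n, c1, ← Functor.map_comp_assoc, c2]
  have TLD_abs : IsTotalLeftDerived MSC.weq.Q (F ⋙ G) (LF ⋙ LG)
      (Functor.whiskerRight α LG ≫ Functor.whiskerLeft F β) :=
    TLD_transfer MSC.weq.Q (F ⋙ G) TLD₀ e' compat_e'
  exact TLD_comparison_isIso MSC.weq.Q (F ⋙ G) TLD_abs hδ ι hι

end FrankeStmt4
end
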